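/- arXiv:0711.1914 — 4 statements merged into one kernel-verified Lean document; each statement's English description precedes it below -/
import Mathlib

section
/- Let r, q be positive integers with 1 ≤ q ≤ r. For a subset S of {1, 2, ..., r+q} with |S| = q (thought of as the positions of q ones in a linear arrangement of r zeros and q ones), define K(S) = Σ_{j ∈ S} #{k : j < k ≤ r+q, k ∉ S} (the total number of zeros to the right of each one). Then Σ_S exp(−2πi·K(S)/(r+1)) = 0, where the sum is over all subsets S of {1, ..., r+q} of cardinality q. -/
/-!
For `S ⊆ {1,…,n}` with `#S = q`, each `j ∈ S` has `n - j` larger positions, of which the ones in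
`S` account for `C(q,2)` pairs in total; hence `K(S) + Σ_{j∈S} j + C(q,2) = n q`. With
`ω = e^{2πi/(r+1)}` the sum is therefore a nonzero multiple of `E(r+q, q)`, where
`E(n, q) = e_q(ω, ω², …, ωⁿ)`. Splitting the `q`-subsets of `{1,…,n+1}` according to whether they
contain `n+1`, or `1`, gives two Pascal recurrences for `E`, whose difference is
`(1 - ω^q) E(n, q) = (ω^q - ω^{n+1}) E(n, q-1)`. For `n = r + q` the right side vanishes because
`ω^{r+1} = 1`, while `ω^q ≠ 1` for `1 ≤ q ≤ r`.
-/

open Finset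

theorem Finset.sum_powersetCard_succ_insert {α M : Type*} [DecidableEq α] [AddCommMonoid M]
    {a : α} {s : Finset α} (ha : a ∉ s) (q : ℕ) (f : Finset α → M) :
    ∑ t ∈ (insert a s).powersetCard (q + 1), f t =
      ∑ t ∈ s.powersetCard (q + 1), f t + ∑ t ∈ s.powersetCard q, f (insert a t) := by
  rw [powersetCard_succ_insert ha, sum_union, sum_image]
  · intro t ht u hu htu
    rw [← erase_insert (fun h => ha (mem_powersetCard.mp ht |>.1 h)),
      ← erase_insert (fun h => ha (mem_powersetCard.mp hu |>.1 h)), htu]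
  · refine disjoint_left.mpr fun t ht ht' => ?_
    obtain ⟨u, -, rfl⟩ := mem_image.mp ht'
    exact ha ((mem_powersetCard.mp ht).1 (mem_insert_self a u))

theorem Finset.sum_card_filter_lt_eq_choose {α : Type*} [LinearOrder α] (s : Finset α) :
    ∑ j ∈ s, #{k ∈ s | j < k} = (#s).choose 2 := by
  induction s using Finset.induction_on_max with
  | empty => simp
  | insert a s hlt ih =>
    have ha : a ∉ s := fun h => lt_irrefl a (hlt a h)
    have htop : #{k ∈ insert a s | a < k} = 0 := by
      simp only [card_eq_zero, filter_eq_empty_iff, mem_insert]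
      rintro k (rfl | hk)
      · exact lt_irrefl k
      · exact (hlt k hk).not_gt
    have hbelow : ∀ j ∈ s, #{k ∈ insert a s | j < k} = #{k ∈ s | j < k} + 1 := fun j hj => by
      rw [filter_insert, if_pos (hlt j hj),
        card_insert_of_notMem fun h => ha (mem_filter.mp h).1]
    rw [sum_insert ha, htop, zero_add, sum_congr rfl hbelow, sum_add_distrib, ih, sum_const,
      smul_eq_mul, mul_one, card_insert_of_notMem ha, Nat.choose_succ_succ', Nat.choose_one_right,
      add_comm]

/-- `K(S)`: the number of inversions of the 0-1 word of length `n` with ones at `S`. -/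
def inversionCount (n : ℕ) (S : Finset ℕ) : ℕ := ∑ j ∈ S, #{k ∈ Icc 1 n | j < k ∧ k ∉ S}

theorem card_filter_lt_notMem_add {n j : ℕ} {S : Finset ℕ} (hS : S ⊆ Icc 1 n) :
    #{k ∈ Icc 1 n | j < k ∧ k ∉ S} + #{k ∈ S | j < k} = n - j := by
  have h_out : {k ∈ Icc 1 n | j < k ∧ k ∉ S} = {k ∈ Ioc j n | k ∉ S} := by
    ext k
    simp only [mem_filter, mem_Icc, mem_Ioc]
    exact ⟨fun ⟨⟨_, hkn⟩, hjk, hkS⟩ => ⟨⟨hjk, hkn⟩, hkS⟩,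
      fun ⟨⟨hjk, hkn⟩, hkS⟩ => ⟨⟨by omega, hkn⟩, hjk, hkS⟩⟩
  have h_in : {k ∈ S | j < k} = {k ∈ Ioc j n | k ∈ S} := by
    ext k
    have := @hS k
    simp only [mem_filter, mem_Icc, mem_Ioc] at this ⊢
    tauto
  rw [h_out, h_in, add_comm, card_filter_add_card_filter_not, Nat.card_Ioc]

theorem inversionCount_add_sum_add_choose {n : ℕ} {S : Finset ℕ} (hS : S ⊆ Icc 1 n) :
    inversionCount n S + ∑ j ∈ S, j + (#S).choose 2 = n * #S := by
  rw [inversionCount, ← sum_card_filter_lt_eq_choose, add_right_comm, ← sum_add_distrib,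
    ← sum_add_distrib, mul_comm]
  refine sum_const_nat fun j hj => ?_
  have := (mem_Icc.mp (hS hj)).2
  rw [card_filter_lt_notMem_add hS]
  omega

section GeometricEsymm

variable {R : Type*}

/-- `e_q(y, y², …, yⁿ)`. -/
def esymmGeom [CommSemiring R] (y : R) (n q : ℕ) : R :=
  ∑ S ∈ (Icc 1 n).powersetCard q, y ^ ∑ j ∈ S, j

theorem esymmGeom_succ_succ [CommSemiring R] (y : R) (n q : ℕ) :
    esymmGeom y (n + 1) (q + 1) = esymmGeom y n (q + 1) + y ^ (n + 1) * esymmGeom y n q := by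
  have hn : n + 1 ∉ Icc 1 n := by simp
  rw [esymmGeom, ← insert_Icc_right_eq_Icc_add_one (by omega), sum_powersetCard_succ_insert hn,
    esymmGeom, esymmGeom, mul_sum]
  refine congrArg _ (sum_congr rfl fun T hT => ?_)
  rw [sum_insert fun h => hn ((mem_powersetCard.mp hT).1 h), pow_add]

-- Split off the least element `1` and shift the rest down by one.
theorem esymmGeom_succ_succ' [CommSemiring R] (y : R) (n q : ℕ) :
    esymmGeom y (n + 1) (q + 1) = y ^ (q + 1) * (esymmGeom y n (q + 1) + esymmGeom y n q) := by
  have h1 : 1 ∉ (Icc 1 n).map (addRightEmbedding 1) := by simp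
  have hshift : ∀ T : Finset ℕ, ∑ j ∈ T.map (addRightEmbedding 1), j = ∑ j ∈ T, j + #T := by
    intro T
    simp only [sum_map, addRightEmbedding_apply, sum_add_distrib, sum_const, smul_eq_mul, mul_one]
  rw [esymmGeom, ← insert_Icc_add_one_left_eq_Icc (by omega : 1 ≤ n + 1), ← map_add_right_Icc,
    sum_powersetCard_succ_insert h1, powersetCard_map, powersetCard_map, sum_map, sum_map,
    esymmGeom, esymmGeom, mul_add, mul_sum, mul_sum]
  congr 1 <;> refine sum_congr rfl fun T hT => ?_
  · rw [RelEmbedding.coe_toEmbedding, mapEmbedding_apply, hshift, (mem_powersetCard.mp hT).2,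
      pow_add, mul_comm]
  · have hT1 : 1 ∉ T.map (addRightEmbedding 1) :=
      fun h => h1 (map_subset_map.mpr (mem_powersetCard.mp hT).1 h)
    rw [RelEmbedding.coe_toEmbedding, mapEmbedding_apply, sum_insert hT1, hshift,
      (mem_powersetCard.mp hT).2]
    ring

theorem esymmGeom_mul_one_sub [CommRing R] (y : R) (n q : ℕ) :
    (1 - y ^ (q + 1)) * esymmGeom y n (q + 1) = (y ^ (q + 1) - y ^ (n + 1)) * esymmGeom y n q := by
  linear_combination (esymmGeom_succ_succ y n q).symm.trans (esymmGeom_succ_succ' y n q)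

theorem esymmGeom_eq_zero [CommRing R] [IsDomain R] {y : R} {r q : ℕ} (hy : y ^ (r + 1) = 1)
    (hq : y ^ q ≠ 1) : esymmGeom y (r + q) q = 0 := by
  obtain ⟨p, rfl⟩ : ∃ p, q = p + 1 :=
    Nat.exists_eq_add_one_of_ne_zero fun h => hq (h ▸ pow_zero y)
  have h := esymmGeom_mul_one_sub y (r + (p + 1)) p
  rw [show r + (p + 1) + 1 = (r + 1) + (p + 1) by ring, pow_add y (r + 1), hy, one_mul, sub_self,
    zero_mul] at h
  exact (mul_eq_zero.mp h).resolve_left (sub_ne_zero.mpr (Ne.symm hq))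

end GeometricEsymm

theorem inv_pow_inversionCount {K : Type*} [Field K] {x : K} (hx : x ≠ 0) {n : ℕ}
    {S : Finset ℕ} (hS : S ⊆ Icc 1 n) :
    (x ^ inversionCount n S)⁻¹ = x ^ (#S).choose 2 / x ^ (n * #S) * x ^ ∑ j ∈ S, j := by
  rw [← inversionCount_add_sum_add_choose hS, pow_add, pow_add]
  field_simp

theorem sum_inv_pow_inversionCount {K : Type*} [Field K] {x : K} (hx : x ≠ 0) (n q : ℕ) :
    ∑ S ∈ (Icc 1 n).powersetCard q, (x ^ inversionCount n S)⁻¹ =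
      x ^ q.choose 2 / x ^ (n * q) * esymmGeom x n q := by
  rw [esymmGeom, mul_sum]
  refine sum_congr rfl fun S hS => ?_
  obtain ⟨hsub, rfl⟩ := mem_powersetCard.mp hS
  exact inv_pow_inversionCount hx hsub

/-- Lemma 1 of Forrester: for `1 ≤ q ≤ r`, summing `exp(-2πi K(S)/(r+1))` over all
subsets `S` of `{1,…,r+q}` of cardinality `q` (positions of the ones), where `K(S)` is the
total number of zeros to the right of each one, gives zero. -/
theorem sum_exp_K_eq_zero (r q : ℕ) (hq1 : 1 ≤ q) (hqr : q ≤ r) :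
    ∑ S ∈ (Finset.Icc 1 (r + q)).powersetCard q,
      Complex.exp (-(2 * Real.pi * Complex.I *
        ((∑ j ∈ S, ((Finset.Icc 1 (r + q)).filter (fun k => j < k ∧ k ∉ S)).card : ℕ) : ℂ)
          / ((r : ℂ) + 1))) = 0 := by
  set ω : ℂ := Complex.exp (2 * Real.pi * Complex.I / (r + 1 : ℕ))
  have hω : IsPrimitiveRoot ω (r + 1) := Complex.isPrimitiveRoot_exp (r + 1) r.succ_ne_zero
  have hterm (S : Finset ℕ) : Complex.exp (-(2 * Real.pi * Complex.I *
      (inversionCount (r + q) S : ℂ) / ((r : ℂ) + 1))) = (ω ^ inversionCount (r + q) S)⁻¹ := by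
    rw [← Complex.exp_nat_mul, ← Complex.exp_neg]
    push_cast
    ring_nf
  calc _ = ∑ S ∈ (Icc 1 (r + q)).powersetCard q, (ω ^ inversionCount (r + q) S)⁻¹ :=
        sum_congr rfl fun S _ => hterm S
    _ = 0 := by
      rw [sum_inv_pow_inversionCount (hω.ne_zero r.succ_ne_zero),
        esymmGeom_eq_zero hω.pow_eq_one (hω.pow_ne_one_of_pos_of_lt (by omega) (by omega)),
        mul_zero]
end

section
/- Let r, q be positive integers with 1 ≤ q ≤ r. Then Σ_S exp(−2πi·(Σ_{j ∈ S} (r+q−j))/(r+1)) = 0, where the sum is over all subsets S of {1, 2, ..., r+q} with |S| = q. -/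
/-!
With `ζ = exp(-2πi/(r+1))` and `n = r + q`, the sum is the elementary symmetric function `e_q`
of `1, ζ, …, ζ^(n-1)`, i.e. the coefficient of `X^r` in `∏_{i<n} (X + ζ^i)`. The first `r + 1`
factors multiply to `X^(r+1) ± 1`, and the remaining ones to a polynomial of degree `q - 1 < r`,
so no term of the product reaches degree exactly `r`.
-/

open Finset Polynomial

theorem prod_Icc_one_sub_eq_prod_range {M : Type*} [CommMonoid M] (f : ℕ → M) (n : ℕ) :
    ∏ j ∈ Icc 1 n, f (n - j) = ∏ i ∈ range n, f i :=
  prod_nbij' (n - ·) (n - ·) (by intro j; simp; omega) (by intro i; simp; omega)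
    (by intro j; simp; omega) (by intro i; simp; omega) (fun _ _ => rfl)

section PrimitiveRoot

variable {K : Type*} [Field K] {ζ : K} {m : ℕ}

theorem IsPrimitiveRoot.prod_range_X_add_C_pow (hζ : IsPrimitiveRoot ζ m) (hm : 0 < m) :
    ∏ i ∈ range m, (X + C (ζ ^ i)) = X ^ m - C ((-1) ^ m) := by
  rw [X_pow_sub_C_eq_prod hζ hm rfl]
  refine prod_congr rfl fun i _ => ?_
  rw [mul_neg_one, map_neg, sub_neg_eq_add]

theorem IsPrimitiveRoot.coeff_prod_range_X_add_C_pow_eq_zero (hζ : IsPrimitiveRoot ζ m)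
    {n k : ℕ} (hmn : m ≤ n) (hk : n - m < k) (hkm : k < m) :
    (∏ i ∈ range n, (X + C (ζ ^ i))).coeff k = 0 := by
  obtain ⟨l, rfl⟩ := Nat.exists_eq_add_of_le hmn
  set g : K[X] := ∏ i ∈ range l, (X + C (ζ ^ (m + i)))
  have hg : g.natDegree < k := by
    calc g.natDegree ≤ ∑ i ∈ range l, (X + C (ζ ^ (m + i))).natDegree := natDegree_prod_le _ _
      _ = l := by simp only [natDegree_X_add_C, sum_const, card_range, smul_eq_mul, mul_one]
      _ < k := by omega
  rw [prod_range_add, hζ.prod_range_X_add_C_pow (by omega), sub_mul, coeff_sub, mul_comm,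
    coeff_mul_X_pow', if_neg (by omega), coeff_C_mul, coeff_eq_zero_of_natDegree_lt hg]
  simp

end PrimitiveRoot

/-- For `1 ≤ q ≤ r`, `∑_S exp(-2πi (∑_{j∈S} (r+q-j))/(r+1)) = 0`, the sum being over all
subsets `S` of `{1,…,r+q}` with `|S| = q`. -/
theorem sum_exp_eq_zero (r q : ℕ) (hq1 : 1 ≤ q) (hqr : q ≤ r) :
    ∑ S ∈ (Finset.Icc 1 (r + q)).powersetCard q,
      Complex.exp (-(2 * Real.pi * Complex.I *
        ((∑ j ∈ S, (r + q - j) : ℕ) : ℂ) / ((r : ℂ) + 1))) = 0 := by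
  set ζ : ℂ := Complex.exp (-(2 * Real.pi * Complex.I / (r + 1)))
  have hζ : IsPrimitiveRoot ζ (r + 1) := by
    have h := (Complex.isPrimitiveRoot_exp (r + 1) r.succ_ne_zero).inv
    rwa [← Complex.exp_neg, Nat.cast_succ] at h
  have hsummand (S : Finset ℕ) : Complex.exp (-(2 * Real.pi * Complex.I *
      ((∑ j ∈ S, (r + q - j) : ℕ) : ℂ) / ((r : ℂ) + 1))) = ∏ j ∈ S, ζ ^ (r + q - j) := by
    rw [prod_pow_eq_pow_sum, ← Complex.exp_nat_mul]
    ring_nf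
  have hcard : #(Icc 1 (r + q)) = r + q := by simp
  have hcoeff := prod_X_add_C_coeff (Icc 1 (r + q)) (fun j => ζ ^ (r + q - j)) (k := r)
    (by omega)
  rw [hcard, Nat.add_sub_cancel_left, prod_Icc_one_sub_eq_prod_range (fun i => X + C (ζ ^ i)),
    hζ.coeff_prod_range_X_add_C_pow_eq_zero (by omega) (by omega) (by omega)] at hcoeff
  simp only [hsummand, hcoeff]
end

section
/- Let r, q be positive integers with 1 ≤ q ≤ r, and set ω = exp(−2πi/(r+1)). Then the coefficient of z^q in the polynomial ∏_{j=1}^{r+q} (1 + z·ω^{j−1}) is equal to 0. -/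
open Finset Polynomial

/-
The first `r + 1` factors multiply to `1 - (-z)^(r+1)`, since the `ω^j` run through all
`(r+1)`-st roots of unity. The remaining `q - 1` factors give a polynomial of degree `< q`, and
multiplying it by `1 - (-z)^(r+1)` does not change its coefficients below degree `r + 1 > q`.
-/

lemma Complex.isPrimitiveRoot_exp_neg (n : ℕ) (hn : n ≠ 0) :
    IsPrimitiveRoot (Complex.exp (-(2 * Real.pi * Complex.I) / n)) n := by
  simpa [neg_div, Complex.exp_neg] using (Complex.isPrimitiveRoot_exp n hn).inv

/-- Evaluation at `Y = 1` of `Y ^ n - (-y) ^ n = ∏ j < n, (Y + ζ ^ j * y)`. -/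
lemma IsPrimitiveRoot.prod_one_add_pow_mul {R : Type*} [CommRing R] [IsDomain R] {ζ : R}
    {n : ℕ} (hζ : IsPrimitiveRoot ζ n) (hn : 0 < n) (y : R) :
    ∏ j ∈ range n, (1 + ζ ^ j * y) = 1 - (-y) ^ n := by
  have h := congrArg (eval 1) (X_pow_sub_C_eq_prod hζ hn (rfl : (-y) ^ n = (-y) ^ n))
  simpa [eval_prod, sub_eq_add_neg] using h.symm

lemma Polynomial.natDegree_prod_one_add_C_mul_X_le {R ι : Type*} [CommSemiring R]
    (s : Finset ι) (a : ι → R) : (∏ i ∈ s, (1 + C (a i) * X)).natDegree ≤ #s := by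
  have hfactor (i : ι) : (1 + C (a i) * X).natDegree ≤ 1 := by
    rw [add_comm, ← C_1]
    exact natDegree_linear_le
  exact (natDegree_prod_le _ _).trans <| by
    simpa using sum_le_card_nsmul s _ 1 fun i _ => hfactor i

/-- For `1 ≤ q ≤ r` and `ω = exp(-2πi/(r+1))`, the coefficient of `z^q` in
`∏_{j=1}^{r+q} (1 + z ω^{j-1})` vanishes. -/
theorem coeff_q_eq_zero (r q : ℕ) (hq1 : 1 ≤ q) (hqr : q ≤ r) :
    (∏ j ∈ Finset.range (r + q),
      (1 + Polynomial.C (Complex.exp (-(2 * Real.pi * Complex.I) / ((r : ℂ) + 1)) ^ j) *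
        Polynomial.X)).coeff q = 0 := by
  set ζ := Complex.exp (-(2 * Real.pi * Complex.I) / ((r : ℂ) + 1))
  have hζ : IsPrimitiveRoot (C ζ) (r + 1) := by
    have h := Complex.isPrimitiveRoot_exp_neg (r + 1) r.succ_ne_zero
    push_cast at h
    exact h.map_of_injective C_injective
  set P := ∏ i ∈ range (q - 1), (1 + C (ζ ^ (r + 1 + i)) * X)
  have hP : P.coeff q = 0 := coeff_eq_zero_of_natDegree_lt <|
    (natDegree_prod_one_add_C_mul_X_le _ _).trans_lt (by rw [card_range]; omega)
  have hfirst : ∏ j ∈ range (r + 1), (1 + C (ζ ^ j) * X) = 1 - (-X) ^ (r + 1) := by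
    simpa only [map_pow] using hζ.prod_one_add_pow_mul r.succ_pos X
  calc _ = ((1 - (-X : ℂ[X]) ^ (r + 1)) * P).coeff q := by
        rw [show r + q = r + 1 + (q - 1) by omega, prod_range_add, hfirst]
    _ = (P - X ^ (r + 1) * ((-1 : ℂ[X]) ^ (r + 1) * P)).coeff q := by
        congr 1; ring
    _ = 0 := by rw [coeff_sub, coeff_X_pow_mul', if_neg (by omega), hP, sub_zero]
end

section
/- (even(OE_N ∪ OE_N) = UE_N for the one-edge Jacobi weight, as a density identity.) Let N ≥ 1 be an integer and let b > −1 be real. There exists a constant c > 0, independent of the μ_j, such that for all 1 > μ_1 > μ_2 > ... > μ_N > 0, the integral over the region {1 > λ_1 > μ_1 > λ_2 > μ_2 > ... > λ_N > μ_N > 0} of ∏_{l=1}^{N} (1−λ_l)^{(b−1)/2} · ∏_{1 ≤ j < k ≤ N} (λ_j − λ_k) dλ, multiplied by ∏_{l=1}^{N} (1−μ_l)^{(b−1)/2} · ∏_{1 ≤ j < k ≤ N} (μ_j − μ_k), equals c · ∏_{l=1}^{N} (1−μ_l)^{b} · ∏_{1 ≤ j < k ≤ N} (μ_j − μ_k)².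 In words: superimpose two independent samples of OE_N((1−x)^{(b−1)/2}); then the joint distribution of every second point (in decreasing order, positions 2, 4, ..., 2N of the 2N points) is that of UE_N((1−x)^b). -/
/-! With `a = (b - 1) / 2` the region is the box `∏ᵢ (μᵢ₊₁, μᵢ)`, `μ₀ = 1`. Write
`∏_{i<j} (λᵢ - λⱼ)` as a Vandermonde determinant and replace its `k`-th column by the monic
`pₖ(x) = xᵏ - k/(a+1+k) xᵏ⁻¹`, chosen so that `(1 - x)^a pₖ(x)` is the derivative of
`Gₖ(x) = -(1 - x)^(a+1) xᵏ / (a+1+k)`. Each variable runs over its own interval, so the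
integral of the determinant is the determinant of the one-dimensional integrals
`Gₖ(μᵢ) - Gₖ(μᵢ₊₁)`. As `Gₖ(1) = 0`, adding each row to the next telescopes the matrix to
`(-Gₖ(μᵢ₊₁))`, which is `∏ₖ (a+1+k)⁻¹ ∏ᵢ (1 - μᵢ)^(a+1)` times a Vandermonde in the `μ`'s.
Multiplying by the density in the `μ`'s gives `(1 - μ)^(2a+1) = (1 - μ)^b` and the squared
Vandermonde. -/

open MeasureTheory Finset

theorem integral_det_eq_det_integral {ι 𝕜 α : Type*} [Fintype ι] [DecidableEq ι]
    [RCLike 𝕜] [MeasurableSpace α] {μ : ι → Measure α} [∀ i, SigmaFinite (μ i)] (f : ι → α → 𝕜)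
    (hf : ∀ i j, Integrable (f j) (μ i)) :
    ∫ x, (Matrix.of fun i j => f j (x i)).det ∂Measure.pi μ
      = (Matrix.of fun i j => ∫ t, f j t ∂μ i).det := by
  have hperm (σ : Equiv.Perm ι) (x : ι → α) :
      ∏ i, f i (x (σ i)) = ∏ i, f (σ.symm i) (x i) := by
    rw [← Equiv.prod_comp σ (fun i => f (σ.symm i) (x i))]
    simp
  simp_rw [Matrix.det_apply', Matrix.of_apply, hperm]
  rw [integral_finsetSum _ fun σ _ =>
    (Integrable.fintype_prod_dep fun i => hf i (σ.symm i)).const_mul _]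
  refine sum_congr rfl fun σ _ => ?_
  rw [integral_const_mul, integral_fintype_prod_eq_prod, ← Equiv.prod_comp σ]
  simp

theorem Matrix.det_of_apply_castSucc_sub_apply_succ {R X : Type*} [CommRing R] {n : ℕ}
    (g : Fin (n + 1) → X → R) (y : Fin (n + 2) → X) (hy : ∀ j, g j (y 0) = 0) :
    (Matrix.of fun i j => g j (y i.castSucc) - g j (y i.succ)).det
      = (Matrix.of fun i j => -g j (y i.succ)).det := by
  refine (Matrix.det_eq_of_forall_row_eq_smul_add_pred (fun _ => 1) (fun j => ?_)
    fun i j => ?_).symm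
  · simp [hy]
  · simp only [Matrix.of_apply, Fin.succ_castSucc]
    ring

theorem prod_Ioi_sub_eq_mul_det_vandermonde {R : Type*} [CommRing R] {n : ℕ} (v : Fin n → R) :
    ∏ i, ∏ j ∈ Ioi i, (v i - v j)
      = (∏ i : Fin n, ∏ _j ∈ Ioi i, (-1 : R)) * (Matrix.vandermonde v).det := by
  simp_rw [Matrix.det_vandermonde, ← prod_mul_distrib, neg_one_mul, neg_sub]

theorem prod_Icc_one_eq_prod_fin {M : Type*} [CommMonoid M] (N : ℕ) (f : ℕ → M) :
    ∏ p ∈ Icc 1 N, f p = ∏ j : Fin N, f (j + 1) := by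
  rw [← Ico_add_one_right_eq_Icc, prod_Ico_eq_prod_range,
    ← Fin.prod_univ_eq_prod_range (fun k => f (1 + k)), Nat.add_sub_cancel]
  simp_rw [add_comm 1]

theorem prod_Icc_prod_Icc_eq_prod_prod_Ioi {M : Type*} [CommMonoid M] (N : ℕ) (g : ℕ → ℕ → M) :
    ∏ p ∈ Icc 1 N, ∏ q ∈ Icc (p + 1) N, g p q
      = ∏ j : Fin N, ∏ k ∈ Ioi j, g (j + 1) (k + 1) := by
  rw [prod_Icc_one_eq_prod_fin]
  refine prod_congr rfl fun j _ => ?_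
  have hmap : (Ioi j).map (Fin.valEmbedding.trans (addRightEmbedding 1))
      = Icc ((j : ℕ) + 1 + 1) N := by
    rw [← map_map, Fin.map_valEmbedding_Ioi, map_add_right_Ioo]
    ext q
    simp only [mem_Icc, mem_Ioo]
    omega
  rw [← hmap, prod_map]
  rfl

section JacobiEdge

open Polynomial

variable {a : ℝ} {k : ℕ}

noncomputable def jacobiEdgePoly (a : ℝ) (k : ℕ) : ℝ[X] :=
  X ^ k - C (k / (a + 1 + k)) * X ^ (k - 1)

noncomputable def jacobiEdgePrimitive (a : ℝ) (k : ℕ) (x : ℝ) : ℝ :=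
  -((1 - x) ^ (a + 1) * x ^ k) / (a + 1 + k)

theorem jacobiEdgePoly_eval (a : ℝ) (k : ℕ) (x : ℝ) :
    (jacobiEdgePoly a k).eval x = x ^ k - k / (a + 1 + k) * x ^ (k - 1) := by
  simp [jacobiEdgePoly]

theorem degree_C_mul_X_pow_pred_lt {R : Type*} [Semiring R] (c : R) (hk : k ≠ 0) :
    (C c * X ^ (k - 1)).degree < (k : WithBot ℕ) :=
  (degree_C_mul_X_pow_le _ _).trans_lt (by exact_mod_cast Nat.sub_one_lt hk)

theorem jacobiEdgePoly_monic (a : ℝ) (k : ℕ) : (jacobiEdgePoly a k).Monic := by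
  rcases eq_or_ne k 0 with rfl | hk
  · simp [jacobiEdgePoly]
  · exact monic_X_pow_sub (degree_C_mul_X_pow_pred_lt _ hk)

theorem jacobiEdgePoly_natDegree (a : ℝ) (k : ℕ) : (jacobiEdgePoly a k).natDegree = k := by
  rcases eq_or_ne k 0 with rfl | hk
  · simp [jacobiEdgePoly]
  · refine natDegree_eq_of_degree_eq_some ?_
    have htail := degree_C_mul_X_pow_pred_lt (k / (a + 1 + k) : ℝ) hk
    rw [← degree_X_pow (R := ℝ)] at htail
    rw [jacobiEdgePoly, degree_sub_eq_left_of_degree_lt htail, degree_X_pow]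

theorem jacobiEdgePrimitive_one (ha : a ≠ -1) (k : ℕ) : jacobiEdgePrimitive a k 1 = 0 := by
  simp [jacobiEdgePrimitive, Real.zero_rpow (show a + 1 ≠ 0 by contrapose! ha; linarith)]

theorem continuous_jacobiEdgePrimitive (ha : -1 ≤ a) (k : ℕ) :
    Continuous (jacobiEdgePrimitive a k) := by
  unfold jacobiEdgePrimitive
  have : Continuous fun x : ℝ => (1 - x) ^ (a + 1) :=
    (continuous_const.sub continuous_id).rpow_const fun _ => Or.inr (by linarith)
  fun_prop

theorem hasDerivAt_jacobiEdgePrimitive (hk : a + 1 + k ≠ 0) {x : ℝ} (hx : x < 1) :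
    HasDerivAt (jacobiEdgePrimitive a k) ((1 - x) ^ a * (jacobiEdgePoly a k).eval x) x := by
  have hx' : 0 < 1 - x := by linarith
  have hpow :
      HasDerivAt (fun y : ℝ => (1 - y) ^ (a + 1)) ((a + 1) * (1 - x) ^ a * (-1)) x := by
    convert ((hasDerivAt_id' x).const_sub 1).rpow_const (p := a + 1) (Or.inl hx'.ne') using 1
    simp only [add_sub_cancel_right]
    ring
  refine ((hpow.mul (hasDerivAt_pow k x)).neg.div_const (a + 1 + k)).congr_deriv ?_
  have hsplit : (1 - x) ^ (a + 1) = (1 - x) ^ a * (1 - x) := Real.rpow_add_one hx'.ne' a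
  have hxk : (k : ℝ) * x ^ (k - 1) * x = k * x ^ k := by
    cases k with
    | zero => simp
    | succ m => simp [pow_succ]; ring
  rw [jacobiEdgePoly_eval, hsplit]
  field_simp
  linear_combination hxk

theorem intervalIntegrable_jacobiEdge (ha : -1 < a) (k : ℕ) (x y : ℝ) :
    IntervalIntegrable (fun t => (1 - t) ^ a * (jacobiEdgePoly a k).eval t) volume x y := by
  have hw : IntervalIntegrable (fun t : ℝ => (1 - t) ^ a) volume x y := by
    simpa using
      (intervalIntegral.intervalIntegrable_rpow' ha (a := 1 - x) (b := 1 - y)).comp_sub_left 1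
  exact hw.mul_continuousOn (Polynomial.continuous _).continuousOn

theorem setIntegral_Ioo_jacobiEdge (ha : -1 < a) (k : ℕ) {x y : ℝ} (hxy : x ≤ y) (hy : y ≤ 1) :
    ∫ t in Set.Ioo x y, (1 - t) ^ a * (jacobiEdgePoly a k).eval t
      = jacobiEdgePrimitive a k y - jacobiEdgePrimitive a k x := by
  rw [← integral_Ioc_eq_integral_Ioo, ← intervalIntegral.integral_of_le hxy]
  have hk : a + 1 + k ≠ 0 := by have := k.cast_nonneg (α := ℝ); linarith
  exact intervalIntegral.integral_eq_sub_of_hasDerivAt_of_le hxy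
    (continuous_jacobiEdgePrimitive ha.le k).continuousOn
    (fun t ht => hasDerivAt_jacobiEdgePrimitive hk (ht.2.trans_le hy))
    (intervalIntegrable_jacobiEdge ha k x y)

theorem det_weighted_jacobiEdgePoly {n : ℕ} (a : ℝ) (x : Fin n → ℝ) :
    (Matrix.of fun i k : Fin n => (1 - x i) ^ a * (jacobiEdgePoly a k).eval (x i)).det
      = (∏ i, (1 - x i) ^ a) * (Matrix.vandermonde x).det := by
  rw [Matrix.det_eval_matrixOfPolynomials_eq_det_vandermonde x
    (fun k => jacobiEdgePoly a k) (fun k => jacobiEdgePoly_natDegree a k)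
    (fun k => jacobiEdgePoly_monic a k), ← Matrix.det_mul_column]
  rfl

theorem det_neg_jacobiEdgePrimitive {n : ℕ} (a : ℝ) (x : Fin n → ℝ) :
    (Matrix.of fun i k : Fin n => -jacobiEdgePrimitive a k (x i)).det
      = (∏ i, (1 - x i) ^ (a + 1)) *
        ((∏ k : Fin n, (a + 1 + k)⁻¹) * (Matrix.vandermonde x).det) := by
  rw [← Matrix.det_mul_row, ← Matrix.det_mul_column]
  congr 1
  ext i k
  simp [jacobiEdgePrimitive, Matrix.vandermonde, div_eq_mul_inv]
  ring

end JacobiEdge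

theorem setIntegral_interlacing_jacobiEdge {n : ℕ} {a : ℝ} (ha : -1 < a)
    {y : Fin (n + 2) → ℝ} (hy0 : y 0 = 1) (hy : Antitone y) :
    ∫ x in Set.univ.pi fun i : Fin (n + 1) => Set.Ioo (y i.succ) (y i.castSucc),
        (∏ i, (1 - x i) ^ a) * ∏ i, ∏ j ∈ Ioi i, (x i - x j)
      = (∏ k : Fin (n + 1), (a + 1 + k)⁻¹) *
        ((∏ i : Fin (n + 1), (1 - y i.succ) ^ (a + 1)) *
          ∏ i : Fin (n + 1), ∏ j ∈ Ioi i, (y i.succ - y j.succ)) := by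
  set ε : ℝ := ∏ i : Fin (n + 1), ∏ _j ∈ Ioi i, (-1 : ℝ)
  set f : Fin (n + 1) → ℝ → ℝ := fun k t => (1 - t) ^ a * (jacobiEdgePoly a k).eval t
  have hle (i : Fin (n + 1)) : y i.succ ≤ y i.castSucc := hy (Fin.castSucc_le_succ i)
  have hle_one (i : Fin (n + 2)) : y i ≤ 1 := hy0 ▸ hy (Fin.zero_le i)
  have hintegrand (x : Fin (n + 1) → ℝ) :
      (∏ i, (1 - x i) ^ a) * ∏ i, ∏ j ∈ Ioi i, (x i - x j)
        = ε * (Matrix.of fun i k => f k (x i)).det := by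
    rw [prod_Ioi_sub_eq_mul_det_vandermonde, det_weighted_jacobiEdgePoly]
    ring
  have hf (i k : Fin (n + 1)) :
      Integrable (f k) (volume.restrict (Set.Ioo (y i.succ) (y i.castSucc))) :=
    (intervalIntegrable_iff_integrableOn_Ioo_of_le (hle i)).mp
      (intervalIntegrable_jacobiEdge ha k _ _)
  have hentries :
      (Matrix.of fun i k : Fin (n + 1) => ∫ t in Set.Ioo (y i.succ) (y i.castSucc), f k t)
        = Matrix.of fun i k : Fin (n + 1) =>
            jacobiEdgePrimitive a k (y i.castSucc) - jacobiEdgePrimitive a k (y i.succ) := by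
    ext i k
    exact setIntegral_Ioo_jacobiEdge ha k (hle i) (hle_one _)
  simp_rw [hintegrand, volume_pi, Measure.restrict_pi_pi, integral_const_mul,
    integral_det_eq_det_integral f hf, hentries,
    Matrix.det_of_apply_castSucc_sub_apply_succ _ y
      fun k => hy0 ▸ jacobiEdgePrimitive_one ha.ne' k,
    det_neg_jacobiEdgePrimitive, prod_Ioi_sub_eq_mul_det_vandermonde fun i => y i.succ]
  ring

def interlacingBounds (μ : ℕ → ℝ) (n : ℕ) : Fin (n + 2) → ℝ :=
  Fin.cons 1 fun j => μ (j + 1)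

theorem antitone_interlacingBounds {μ : ℕ → ℝ} {n : ℕ} (h1 : μ 1 ≤ 1)
    (hμ : ∀ j, 1 ≤ j → j < n + 1 → μ (j + 1) ≤ μ j) : Antitone (interlacingBounds μ n) := by
  refine Fin.antitone_iff_succ_le.mpr (Fin.cases h1 fun j => ?_)
  simpa [interlacingBounds, ← Fin.succ_castSucc] using hμ (j + 1) (by omega) (by omega)

theorem setOf_interlacing_eq_pi (μ : ℕ → ℝ) {n : ℕ} (h : 1 ≤ n + 1) :
    {l : Fin (n + 1) → ℝ | l ⟨0, h⟩ < 1 ∧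
        ∀ j : Fin (n + 1), (1 ≤ j.val → l j < μ j.val) ∧ μ (j.val + 1) < l j}
      = Set.univ.pi fun i =>
          Set.Ioo (interlacingBounds μ n i.succ) (interlacingBounds μ n i.castSucc) := by
  have hupper (l : Fin (n + 1) → ℝ) (i : Fin (n + 1)) :
      l i < interlacingBounds μ n i.castSucc ↔
        (i = 0 → l i < 1) ∧ (1 ≤ i.val → l i < μ i) := by
    induction i using Fin.cases <;> simp [interlacingBounds]
  ext l
  simp only [Set.mem_ofPred_eq, Set.mem_univ_pi, Set.mem_Ioo, hupper]
  simp only [interlacingBounds, Fin.cons_succ]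
  constructor
  · rintro ⟨h0, h⟩ i
    exact ⟨(h i).2, fun hi => by subst hi; exact h0, (h i).1⟩
  · intro h
    exact ⟨(h 0).2.1 rfl, fun j => ⟨(h j).2.2, (h j).1⟩⟩

/-- `even(OE_N ∪ OE_N) = UE_N` for the one-edge Jacobi weight, as a density identity:
integrating the interlacing odd-position points `λ` against the superposition density of
two copies of `OE_N((1-x)^{(b-1)/2})` yields the `UE_N((1-x)^b)` density in the
even-position points `μ`, up to a constant. -/
theorem even_superposition_jacobi_one_edge (N : ℕ) (hN : 1 ≤ N) (b : ℝ) (hb : -1 < b) :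
    ∃ c : ℝ, 0 < c ∧ ∀ μ : ℕ → ℝ, μ 1 < 1 → 0 < μ N →
      (∀ j, 1 ≤ j → j < N → μ (j + 1) < μ j) →
      (∫ l in {l : Fin N → ℝ |
          l ⟨0, hN⟩ < 1 ∧
          ∀ j : Fin N,
            (1 ≤ j.val → l j < μ j.val) ∧ μ (j.val + 1) < l j},
        (∏ j : Fin N, (1 - l j) ^ ((b - 1) / 2)) *
          ∏ j : Fin N, ∏ k ∈ Finset.univ.filter (fun k => j < k), (l j - l k)) *
      ((∏ p ∈ Finset.Icc 1 N, (1 - μ p) ^ ((b - 1) / 2)) *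
        ∏ p ∈ Finset.Icc 1 N, ∏ q ∈ Finset.Icc (p + 1) N, (μ p - μ q)) =
      c * (∏ p ∈ Finset.Icc 1 N, (1 - μ p) ^ b) *
        ∏ p ∈ Finset.Icc 1 N, ∏ q ∈ Finset.Icc (p + 1) N, (μ p - μ q) ^ 2 := by
  obtain ⟨n, rfl⟩ : ∃ n, N = n + 1 := ⟨N - 1, by omega⟩
  set a := (b - 1) / 2
  have ha : -1 < a := by simp only [a]; linarith
  refine ⟨∏ k : Fin (n + 1), (a + 1 + k)⁻¹, prod_pos fun k _ => ?_, fun μ hμ1 _ hμ => ?_⟩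
  · have := k.val.cast_nonneg (α := ℝ)
    exact inv_pos.mpr (by linarith)
  have hy := antitone_interlacingBounds hμ1.le fun j h h' => (hμ j h h').le
  have hpow : (∏ j : Fin (n + 1), (1 - μ (j + 1)) ^ (a + 1)) *
        ∏ j : Fin (n + 1), (1 - μ (j + 1)) ^ a = ∏ j : Fin (n + 1), (1 - μ (j + 1)) ^ b := by
    rw [← prod_mul_distrib]
    refine prod_congr rfl fun j _ => ?_
    have hμj : μ (j + 1) < 1 := (hy (Fin.succ_le_succ_iff.mpr (Fin.zero_le j))).trans_lt hμ1
    rw [← Real.rpow_add (by linarith)]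
    congr 1
    simp only [a]
    ring
  simp_rw [setOf_interlacing_eq_pi, filter_lt_eq_Ioi,
    setIntegral_interlacing_jacobiEdge ha rfl hy]
  simp only [interlacingBounds, Fin.cons_succ]
  rw [prod_Icc_prod_Icc_eq_prod_prod_Ioi, prod_Icc_prod_Icc_eq_prod_prod_Ioi,
    prod_Icc_one_eq_prod_fin, prod_Icc_one_eq_prod_fin, ← hpow]
  simp only [sq, prod_mul_distrib]
  ring
end
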